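/- arXiv:2209.04749 — 4 statements merged into one kernel-verified Lean document; each statement's English description precedes it below -/
import Mathlib

section
/- Let Ω ⊆ ℝ^N (N ≥ 1) be open, a ∈ ℝ^N, d > 0, λ ∈ ℝ, and let σ₁ > 0. Let φ : ℝ^N → ℝ be twice differentiable at every point of Ω and satisfy −Δφ(x) = σ₁·φ(x) for all x ∈ Ω, and suppose φ(x₀) ≠ 0 for some x₀ ∈ Ω. Set ζ(x) := exp(−(λ/(2d))⟨a,x⟩) and u(x) := ζ(x)·φ(x). Then d·Δu(x) + λ⟨a,∇u(x)⟩ + u(x) = 0 for all x ∈ Ω if and only if 4d(1 − σ₁ d) = λ²|a|². -/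
/-- The Laplacian of `f` at `x`: the sum of the pure second partial derivatives,
i.e. the trace of the second Fréchet derivative. -/
noncomputable def lap {N : ℕ} (f : EuclideanSpace ℝ (Fin N) → ℝ)
    (x : EuclideanSpace ℝ (Fin N)) : ℝ :=
  ∑ i : Fin N, fderiv ℝ (fderiv ℝ f) x (EuclideanSpace.single i 1) (EuclideanSpace.single i 1)

lemma aux_inner_single {N : ℕ} (a : EuclideanSpace ℝ (Fin N)) (i : Fin N) :
    (inner ℝ a (EuclideanSpace.single i (1:ℝ)) : ℝ) = a i := by
  simp [EuclideanSpace.inner_single_right]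

lemma aux_sum_single {N : ℕ} (a : EuclideanSpace ℝ (Fin N)) :
    ∑ i, a i • EuclideanSpace.single i (1:ℝ) = a := by
  ext j
  have h : (∑ i, a i • EuclideanSpace.single i (1:ℝ)) j
      = ∑ i, (a i • EuclideanSpace.single i (1:ℝ)) j :=
    by rw [WithLp.ofLp_sum]; exact Finset.sum_apply j Finset.univ _
  rw [h]
  simp [EuclideanSpace.single_apply]

lemma aux_sum_sq {N : ℕ} (a : EuclideanSpace ℝ (Fin N)) :
    ∑ i, (a i)^2 = ‖a‖^2 := by
  rw [EuclideanSpace.norm_eq, Real.sq_sqrt (by positivity)]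
  simp [sq_abs]

set_option maxHeartbeats 1000000 in
theorem stmt2 {N : ℕ} (hN : 1 ≤ N) (Ω : Set (EuclideanSpace ℝ (Fin N))) (hΩ : IsOpen Ω)
    (a : EuclideanSpace ℝ (Fin N)) (d : ℝ) (hd : 0 < d) (lam : ℝ) (σ₁ : ℝ) (hσ : 0 < σ₁)
    (φ : EuclideanSpace ℝ (Fin N) → ℝ)
    (hφ1 : ∀ x ∈ Ω, DifferentiableAt ℝ φ x)
    (hφ2 : ∀ x ∈ Ω, DifferentiableAt ℝ (fderiv ℝ φ) x)
    (hφeig : ∀ x ∈ Ω, -lap φ x = σ₁ * φ x)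
    (x₀ : EuclideanSpace ℝ (Fin N)) (hx₀ : x₀ ∈ Ω) (hφx₀ : φ x₀ ≠ 0)
    (ζ : EuclideanSpace ℝ (Fin N) → ℝ)
    (hζ : ∀ x, ζ x = Real.exp (-(lam / (2 * d)) * (inner ℝ a x : ℝ)))
    (u : EuclideanSpace ℝ (Fin N) → ℝ)
    (hu : ∀ x, u x = ζ x * φ x) :
    (∀ x ∈ Ω, d * lap u x + lam * fderiv ℝ u x a + u x = 0)
      ↔ 4 * d * (1 - σ₁ * d) = lam ^ 2 * ‖a‖ ^ 2 := by
  set c : ℝ := -(lam / (2 * d)) with hc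
  set L : EuclideanSpace ℝ (Fin N) →L[ℝ] ℝ := innerSL ℝ a with hL
  have hζfun : ζ = fun y => Real.exp (c * (inner ℝ a y : ℝ)) := funext fun y => hζ y
  have hufun : u = fun y => ζ y * φ y := funext fun y => hu y
  have hζpos : ∀ x, 0 < ζ x := fun x => by rw [hζ x]; exact Real.exp_pos _
  -- first derivative of ζ
  have hζd : ∀ x, HasFDerivAt ζ ((c * ζ x) • L) x := by
    intro x
    have h1 : HasFDerivAt (fun y : EuclideanSpace ℝ (Fin N) => c * (L y : ℝ))
        (c • L) x := L.hasFDerivAt.const_mul c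
    have h2 := h1.exp
    rw [hζfun]
    simpa [hL, smul_smul, mul_comm] using h2
  -- first derivative of u on Ω
  have hud : ∀ x ∈ Ω, HasFDerivAt u
      (ζ x • fderiv ℝ φ x + (φ x * (c * ζ x)) • L) x := by
    intro x hx
    have h := (hζd x).mul (hφ1 x hx).hasFDerivAt
    rw [hufun]
    simp only [smul_smul] at h
    exact h
  have hfu : ∀ x ∈ Ω, fderiv ℝ u x = ζ x • fderiv ℝ φ x + (φ x * (c * ζ x)) • L :=
    fun x hx => (hud x hx).fderiv
  -- second derivative of u on Ω
  have hud2 : ∀ x ∈ Ω, fderiv ℝ (fderiv ℝ u) x =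
      (ζ x • fderiv ℝ (fderiv ℝ φ) x + ((c * ζ x) • L).smulRight (fderiv ℝ φ x))
      + (φ x • (c • ((c * ζ x) • L)) + (c * ζ x) • fderiv ℝ φ x).smulRight L := by
    intro x hx
    have heq : fderiv ℝ u =ᶠ[nhds x]
        fun y => ζ y • fderiv ℝ φ y + (φ y * (c * ζ y)) • L := by
      filter_upwards [hΩ.mem_nhds hx] with y hy
      exact hfu y hy
    rw [heq.fderiv_eq]
    have hG1 : HasFDerivAt (fun y => ζ y • fderiv ℝ φ y)
        (ζ x • fderiv ℝ (fderiv ℝ φ) x + ((c * ζ x) • L).smulRight (fderiv ℝ φ x)) x :=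
      (hζd x).smul (hφ2 x hx).hasFDerivAt
    have hG2s : HasFDerivAt (fun y => φ y * (c * ζ y))
        (φ x • (c • ((c * ζ x) • L)) + (c * ζ x) • fderiv ℝ φ x) x :=
      (hφ1 x hx).hasFDerivAt.mul ((hζd x).const_mul c)
    have hG2 : HasFDerivAt (fun y => (φ y * (c * ζ y)) • L)
        ((φ x • (c • ((c * ζ x) • L)) + (c * ζ x) • fderiv ℝ φ x).smulRight L) x :=
      hG2s.smul_const L
    exact (hG1.add hG2).fderiv
  -- key identity
  have key : ∀ x ∈ Ω, d * lap u x + lam * fderiv ℝ u x a + u x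
      = ζ x * φ x * ((4 * d * (1 - σ₁ * d) - lam ^ 2 * ‖a‖ ^ 2) / (4 * d)) := by
    intro x hx
    have hlapφ : lap φ x = -(σ₁ * φ x) := by
      have h := hφeig x hx; linarith
    have hφa : fderiv ℝ φ x a = ∑ i, a i * fderiv ℝ φ x (EuclideanSpace.single i (1:ℝ)) := by
      conv_lhs => rw [← aux_sum_single a]
      rw [map_sum]
      simp
    have hlapu : lap u x = ζ x * lap φ x + 2 * c * ζ x * fderiv ℝ φ x a
        + φ x * c ^ 2 * ζ x * ‖a‖ ^ 2 := by
      have hterm : ∀ i : Fin N,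
          fderiv ℝ (fderiv ℝ u) x (EuclideanSpace.single i 1) (EuclideanSpace.single i 1)
          = ζ x * fderiv ℝ (fderiv ℝ φ) x (EuclideanSpace.single i 1) (EuclideanSpace.single i 1)
            + c * ζ x * a i * fderiv ℝ φ x (EuclideanSpace.single i 1)
            + (φ x * (c * (c * ζ x * a i)) + c * ζ x * fderiv ℝ φ x (EuclideanSpace.single i 1))
              * a i := by
        intro i
        rw [hud2 x hx]
        simp only [ContinuousLinearMap.add_apply, ContinuousLinearMap.coe_smul', Pi.smul_apply,
          ContinuousLinearMap.smulRight_apply, smul_eq_mul, hL, innerSL_apply_apply,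
          aux_inner_single]
      have hA : lap u x = ∑ i : Fin N,
          (ζ x * fderiv ℝ (fderiv ℝ φ) x (EuclideanSpace.single i 1) (EuclideanSpace.single i 1)
            + c * ζ x * a i * fderiv ℝ φ x (EuclideanSpace.single i 1)
            + (φ x * (c * (c * ζ x * a i)) + c * ζ x * fderiv ℝ φ x (EuclideanSpace.single i 1))
              * a i) := by
        unfold lap
        exact Finset.sum_congr rfl fun i _ => hterm i
      rw [hA, Finset.sum_add_distrib, Finset.sum_add_distrib]
      have h1 : ∑ i : Fin N, ζ x * fderiv ℝ (fderiv ℝ φ) x (EuclideanSpace.single i 1)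
          (EuclideanSpace.single i 1) = ζ x * lap φ x := by
        rw [lap, Finset.mul_sum]
      have h2 : ∑ i : Fin N, c * ζ x * a i * fderiv ℝ φ x (EuclideanSpace.single i 1)
          = c * ζ x * fderiv ℝ φ x a := by
        rw [hφa, Finset.mul_sum]
        congr 1; ext i; ring
      have h3 : ∑ i : Fin N,
          (φ x * (c * (c * ζ x * a i)) + c * ζ x * fderiv ℝ φ x (EuclideanSpace.single i 1)) * a i
          = φ x * c ^ 2 * ζ x * ‖a‖ ^ 2 + c * ζ x * fderiv ℝ φ x a := by
        have h4 : ∀ i : Fin N,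
            (φ x * (c * (c * ζ x * a i)) + c * ζ x * fderiv ℝ φ x (EuclideanSpace.single i 1)) * a i
            = φ x * c ^ 2 * ζ x * (a i) ^ 2
              + c * ζ x * (a i * fderiv ℝ φ x (EuclideanSpace.single i 1)) := by
          intro i; ring
        rw [Finset.sum_congr rfl fun i _ => h4 i, Finset.sum_add_distrib]
        rw [← Finset.mul_sum, ← Finset.mul_sum, aux_sum_sq, hφa]
      rw [h1, h2, h3]
      ring
    have hfua : fderiv ℝ u x a = ζ x * fderiv ℝ φ x a + φ x * (c * ζ x) * ‖a‖ ^ 2 := by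
      rw [hfu x hx]
      simp only [ContinuousLinearMap.add_apply, ContinuousLinearMap.coe_smul', Pi.smul_apply,
        smul_eq_mul, hL, innerSL_apply_apply, real_inner_self_eq_norm_sq]
    rw [hlapu, hfua, hu x, hlapφ, hc]
    have h4d : (4 : ℝ) * d ≠ 0 := by positivity
    field_simp
    ring
  constructor
  · intro h
    have hk := h x₀ hx₀
    rw [key x₀ hx₀] at hk
    have h0 : (4 * d * (1 - σ₁ * d) - lam ^ 2 * ‖a‖ ^ 2) / (4 * d) = 0 := by
      rcases mul_eq_zero.mp hk with h' | h'
      · rcases mul_eq_zero.mp h' with h'' | h''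
        · exact absurd h'' (hζpos x₀).ne'
        · exact absurd h'' hφx₀
      · exact h'
    have h4d : (4 : ℝ) * d ≠ 0 := by positivity
    have h5 := (div_eq_zero_iff.mp h0).resolve_right h4d
    linarith
  · intro h x hx
    rw [key x hx, h]
    simp
end

section
/- Let q ≥ 4 be an integer and let λ ≥ 0 and z ≥ 0 be real numbers. If z^{q−1} − λ·z − 1 ≤ 0, then z ≤ λ^{1/(q−2)} + 1. -/
/-! If `z > λ^{1/n} + 1`, then `z > 1` and `z^n > (λ^{1/n} + 1)^n ≥ λ + 1` (superadditivity of
`t ↦ t^n`), so `z^{n+1} > (λ + 1) z > λ z + 1`. Here `n = q - 2`. -/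

lemma add_one_le_rpow_one_div_add_one_pow {lam : ℝ} (hlam : 0 ≤ lam) {n : ℕ} (hn : n ≠ 0) :
    lam + 1 ≤ (lam ^ ((1 : ℝ) / n) + 1) ^ n := by
  calc lam + 1 = (lam ^ ((1 : ℝ) / n)) ^ n + 1 ^ n := by
        rw [one_div, Real.rpow_inv_natCast_pow hlam hn, one_pow]
    _ ≤ (lam ^ ((1 : ℝ) / n) + 1) ^ n :=
        pow_add_pow_le (Real.rpow_nonneg hlam _) zero_le_one hn

theorem le_rpow_one_div_add_one_of_pow_succ_le {lam z : ℝ} (hlam : 0 ≤ lam) {n : ℕ} (hn : n ≠ 0)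
    (h : z ^ (n + 1) ≤ lam * z + 1) : z ≤ lam ^ ((1 : ℝ) / n) + 1 := by
  by_contra! hz
  have hL : 0 ≤ lam ^ ((1 : ℝ) / n) := Real.rpow_nonneg hlam _
  have hz1 : 1 < z := by linarith
  have hzn : lam + 1 < z ^ n :=
    (add_one_le_rpow_one_div_add_one_pow hlam hn).trans_lt
      (pow_lt_pow_left₀ hz (by positivity) hn)
  have : (lam + 1) * z < z ^ n * z := mul_lt_mul_of_pos_right hzn (by linarith)
  rw [pow_succ] at h
  nlinarith

theorem stmt4_general (q : ℕ) (hq : 4 ≤ q) (lam z : ℝ) (hlam : 0 ≤ lam)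
    (h : z ^ (q - 1) - lam * z - 1 ≤ 0) :
    z ≤ lam ^ ((1 : ℝ) / ((q : ℝ) - 2)) + 1 := by
  have hcast : (q : ℝ) - 2 = ((q - 2 : ℕ) : ℝ) := by
    rw [Nat.cast_sub (by omega)]
    norm_num
  have hexp : q - 1 = (q - 2) + 1 := by omega
  rw [hcast]
  exact le_rpow_one_div_add_one_of_pow_succ_le hlam (by omega) (by rw [← hexp]; linarith)

theorem stmt4 (q : ℕ) (hq : 4 ≤ q) (lam z : ℝ) (hlam : 0 ≤ lam) (hz : 0 ≤ z)
    (h : z ^ (q - 1) - lam * z - 1 ≤ 0) :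
    z ≤ lam ^ ((1 : ℝ) / ((q : ℝ) - 2)) + 1 :=
  stmt4_general q hq lam z hlam h
end

section
/- Let Ω ⊆ ℝ^N (N ≥ 1) be a nonempty bounded open set, a ∈ ℝ^N, d > 0, λ ∈ ℝ, and let q ≥ 4 be an integer. Let u be continuous on the closure of Ω, twice continuously differentiable on Ω, with u(x) > 0 for all x ∈ Ω, u(x) = 0 for all x in the frontier of Ω, and −d·Δu(x) = λ⟨a,∇u(x)⟩ + u(x) + λ·u(x)² − u(x)^q for all x ∈ Ω. Then the supremum of u over the closure of Ω satisfies sup u ≤ λ^{1/(q−2)} + 1 if λ ≥ 0, and sup u ≤ 1 if λ < 0. -/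
open Filter Topology

/-- superadditivity of powers -/
lemma pow_superadd (c : ℝ) (hc : 0 ≤ c) : ∀ n, 1 ≤ n → c ^ n + 1 ≤ (c + 1) ^ n := by
  intro n hn
  induction n with
  | zero => omega
  | succ k ih =>
    rcases Nat.eq_zero_or_pos k with hk | hk
    · subst hk; simp
    · have h1 := ih hk
      have h2 : (0:ℝ) ≤ c ^ k := pow_nonneg hc k
      have h3 : (0:ℝ) ≤ (c+1)^k := pow_nonneg (by linarith) k
      calc c ^ (k+1) + 1 = c * c ^ k + 1 := by ring
        _ ≤ (c+1) * (c^k + 1) := by nlinarith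
        _ ≤ (c+1) * (c+1)^k := by nlinarith
        _ = (c+1)^(k+1) := by ring

/-- 1-dim second derivative test at a local max -/
lemma second_deriv_nonpos (g h : ℝ → ℝ) (c δ : ℝ) (hδ : 0 < δ)
    (hg : ∀ t ∈ Set.Ioo (-δ) δ, HasDerivAt g (h t) t)
    (hh : HasDerivAt h c 0) (h0 : h 0 = 0) (hmax : IsLocalMax g 0) : c ≤ 0 := by
  by_contra hcon
  push_neg at hcon
  have hslope : Tendsto (slope h 0) (𝓝[≠] 0) (𝓝 c) := hasDerivAt_iff_tendsto_slope.mp hh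
  have hev1 : ∀ᶠ t in 𝓝[≠] (0:ℝ), 0 < slope h 0 t := hslope.eventually_const_lt hcon
  have hev2 : ∀ᶠ t in 𝓝[≠] (0:ℝ), g t ≤ g 0 := hmax.filter_mono nhdsWithin_le_nhds
  have hev := hev1.and hev2
  rw [eventually_nhdsWithin_iff, Metric.eventually_nhds_iff] at hev
  obtain ⟨ε, hε, hev⟩ := hev
  set ε' := min ε δ / 2 with hε'def
  have hε' : 0 < ε' := by positivity
  have hε'lt : ε' < ε := by
    have := min_le_left ε δ; simp only [hε'def]; linarith
  have hε'ltδ : ε' < δ := by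
    have := min_le_right ε δ; simp only [hε'def]; linarith
  have hsub : Set.Icc (0:ℝ) ε' ⊆ Set.Ioo (-δ) δ := by
    intro t ht
    exact ⟨by linarith [ht.1], by linarith [ht.2]⟩
  have hmono : StrictMonoOn g (Set.Icc (0:ℝ) ε') := by
    apply strictMonoOn_of_deriv_pos (convex_Icc _ _)
    · intro t ht
      exact ((hg t (hsub ht)).continuousAt).continuousWithinAt
    · intro t ht
      rw [interior_Icc] at ht
      have htδ : t ∈ Set.Ioo (-δ) δ := ⟨by linarith [ht.1], by linarith [ht.2]⟩
      rw [(hg t htδ).deriv]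
      have htne : t ≠ 0 := ne_of_gt ht.1
      have hd : dist t 0 < ε := by
        rw [Real.dist_eq, sub_zero, abs_of_pos ht.1]; linarith [ht.2]
      have hsl := (hev hd htne).1
      rw [slope_def_field, h0, sub_zero, sub_zero] at hsl
      have := mul_pos hsl ht.1
      rwa [div_mul_cancel₀ _ (ne_of_gt ht.1)] at this
  have h1 : g 0 < g ε' := hmono (by constructor <;> linarith) (by constructor <;> linarith) hε'
  have hd : dist ε' 0 < ε := by rw [Real.dist_eq, sub_zero, abs_of_pos hε']; linarith
  have h2 := (hev hd (ne_of_gt hε')).2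
  linarith
theorem stmt8 {N : ℕ} (hN : 1 ≤ N) (Ω : Set (EuclideanSpace ℝ (Fin N)))
    (hΩopen : IsOpen Ω) (hΩne : Ω.Nonempty) (hΩbdd : Bornology.IsBounded Ω)
    (a : EuclideanSpace ℝ (Fin N)) (d : ℝ) (hd : 0 < d) (lam : ℝ) (q : ℕ) (hq : 4 ≤ q)
    (u : EuclideanSpace ℝ (Fin N) → ℝ)
    (hucont : ContinuousOn u (closure Ω)) (huC2 : ContDiffOn ℝ 2 u Ω)
    (hupos : ∀ x ∈ Ω, 0 < u x)
    (hubd : ∀ x ∈ frontier Ω, u x = 0)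
    (hpde : ∀ x ∈ Ω, -(d * lap u x)
      = lam * fderiv ℝ u x a + u x + lam * (u x) ^ 2 - (u x) ^ q) :
    (0 ≤ lam → sSup (u '' closure Ω) ≤ lam ^ ((1 : ℝ) / ((q : ℝ) - 2)) + 1)
      ∧ (lam < 0 → sSup (u '' closure Ω) ≤ 1) := by
  have hKc : IsCompact (closure Ω) := hΩbdd.isCompact_closure
  have hSc : IsCompact (u '' closure Ω) := hKc.image_of_continuousOn hucont
  obtain ⟨z, hz⟩ := hΩne
  have hSne : (u '' closure Ω).Nonempty := ⟨u z, z, subset_closure hz, rfl⟩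
  set M := sSup (u '' closure Ω) with hMdef
  obtain ⟨x₀, hx₀cl, hMx⟩ := hSc.sSup_mem hSne
  rw [← hMdef] at hMx
  have hle : ∀ y ∈ closure Ω, u y ≤ M := fun y hy => le_csSup hSc.bddAbove ⟨y, hy, rfl⟩
  -- key dichotomy
  have hkey : M = 0 ∨ (0 < M ∧ M ^ (q - 1) ≤ 1 + lam * M) := by
    by_cases hx₀ : x₀ ∈ Ω
    · right
      refine ⟨hMx ▸ hupos x₀ hx₀, ?_⟩
      have hloc : IsLocalMax u x₀ := by
        filter_upwards [hΩopen.mem_nhds hx₀] with y hy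
        exact (hle y (subset_closure hy)).trans_eq hMx.symm
      have hgrad : fderiv ℝ u x₀ = 0 := hloc.fderiv_eq_zero
      obtain ⟨r, hr, hball⟩ := Metric.isOpen_iff.mp hΩopen x₀ hx₀
      have hdiff : DifferentiableOn ℝ u Ω := huC2.differentiableOn (by norm_num)
      have hFdiff : DifferentiableOn ℝ (fderiv ℝ u) Ω :=
        (huC2.fderiv_of_isOpen (m := 1) hΩopen (by norm_num)).differentiableOn one_ne_zero
      have hterm : ∀ i : Fin N,
          fderiv ℝ (fderiv ℝ u) x₀ (EuclideanSpace.single i 1) (EuclideanSpace.single i 1) ≤ 0 := by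
        intro i
        set v : EuclideanSpace ℝ (Fin N) := EuclideanSpace.single i 1 with hv
        have hvnorm : ‖v‖ = 1 := by simp [hv, EuclideanSpace.norm_single]
        have hmem : ∀ t ∈ Set.Ioo (-r) r, x₀ + t • v ∈ Ω := by
          intro t ht
          apply hball
          rw [Metric.mem_ball, dist_eq_norm]
          simp only [add_sub_cancel_left]
          rw [norm_smul, hvnorm, mul_one, Real.norm_eq_abs, abs_lt]
          exact ⟨ht.1, ht.2⟩
        have hL : ∀ t : ℝ, HasDerivAt (fun s : ℝ => x₀ + s • v) v t := by
          intro t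
          simpa using ((hasDerivAt_id t).smul_const v).const_add x₀
        have hg : ∀ t ∈ Set.Ioo (-r) r,
            HasDerivAt (fun s : ℝ => u (x₀ + s • v)) (fderiv ℝ u (x₀ + t • v) v) t := by
          intro t ht
          have hu : DifferentiableAt ℝ u (x₀ + t • v) :=
            hdiff.differentiableAt (hΩopen.mem_nhds (hmem t ht))
          exact hu.hasFDerivAt.comp_hasDerivAt t (hL t)
        have hh : HasDerivAt (fun t : ℝ => fderiv ℝ u (x₀ + t • v) v)
            (fderiv ℝ (fderiv ℝ u) x₀ v v) 0 := by
          have h0 : x₀ + (0:ℝ) • v = x₀ := by simp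
          have hF : DifferentiableAt ℝ (fderiv ℝ u) x₀ :=
            hFdiff.differentiableAt (hΩopen.mem_nhds hx₀)
          have h1 : HasFDerivAt (fun y => fderiv ℝ u y v)
              ((ContinuousLinearMap.apply ℝ ℝ v).comp (fderiv ℝ (fderiv ℝ u) x₀))
              (x₀ + (0:ℝ) • v) := by
            rw [h0]
            exact (ContinuousLinearMap.apply ℝ ℝ v).hasFDerivAt.comp x₀ hF.hasFDerivAt
          have h2 := h1.comp_hasDerivAt 0 (hL 0)
          simpa [h0, Function.comp_def] using h2
        have hgm : IsLocalMax (fun s : ℝ => u (x₀ + s • v)) 0 := by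
          have hcont : ContinuousAt (fun s : ℝ => x₀ + s • v) 0 := by fun_prop
          have : Filter.Tendsto (fun s : ℝ => x₀ + s • v) (nhds 0) (nhds x₀) := by
            simpa using hcont.tendsto
          filter_upwards [this.eventually hloc] with t ht
          simpa using ht
        have h0 : fderiv ℝ u (x₀ + (0:ℝ) • v) v = 0 := by
          simp [hgrad]
        exact second_deriv_nonpos _ _ _ r hr hg hh h0 hgm
      have hlap : lap u x₀ ≤ 0 := Finset.sum_nonpos fun i _ => hterm i
      have hp := hpde x₀ hx₀
      rw [hgrad] at hp
      simp only [ContinuousLinearMap.zero_apply, mul_zero, zero_add] at hp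
      have hM0 : 0 < u x₀ := hupos x₀ hx₀
      have hq' : u x₀ ^ q ≤ u x₀ + lam * u x₀ ^ 2 := by nlinarith
      rw [hMx] at hq' hM0
      have hqeq : q - 1 + 1 = q := by omega
      have : M ^ (q - 1) * M ≤ (1 + lam * M) * M := by
        rw [← pow_succ, hqeq]; nlinarith
      exact le_of_mul_le_mul_right this hM0
    · left
      have hfr : x₀ ∈ frontier Ω := by
        rw [frontier, hΩopen.interior_eq]
        exact ⟨hx₀cl, hx₀⟩
      rw [← hMx]
      exact hubd x₀ hfr
  constructor
  · intro hlam
    set c := lam ^ ((1 : ℝ) / ((q : ℝ) - 2)) with hcdef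
    have hc0 : 0 ≤ c := Real.rpow_nonneg hlam _
    rcases hkey with h0 | ⟨hM0, hkey⟩
    · rw [h0]; linarith
    · by_contra hcon
      push_neg at hcon
      have hcq : c ^ (q - 2) = lam := by
        rw [hcdef, ← Real.rpow_natCast (lam ^ ((1 : ℝ) / ((q : ℝ) - 2))) (q - 2),
          ← Real.rpow_mul hlam]
        have hcast : ((q - 2 : ℕ) : ℝ) = (q : ℝ) - 2 := by
          have : (2:ℕ) ≤ q := by omega
          push_cast [this]; ring
        rw [hcast, one_div, inv_mul_cancel₀ (by
          have : (4:ℝ) ≤ (q:ℝ) := by exact_mod_cast hq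
          linarith), Real.rpow_one]
      have hM1 : 1 < M := by linarith
      have hpowlt : (c + 1) ^ (q - 2) < M ^ (q - 2) :=
        pow_lt_pow_left₀ hcon (by linarith) (by omega)
      have hsuper : c ^ (q - 2) + 1 ≤ (c + 1) ^ (q - 2) :=
        pow_superadd c hc0 (q - 2) (by omega)
      have hqeq2 : q - 2 + 1 = q - 1 := by omega
      have hsplit : M ^ (q - 1) = M ^ (q - 2) * M := by rw [← pow_succ, hqeq2]
      rw [hsplit] at hkey
      nlinarith
  · intro hlam
    rcases hkey with h0 | ⟨hM0, hkey⟩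
    · rw [h0]; norm_num
    · by_contra hcon
      push_neg at hcon
      have hself : M ≤ M ^ (q - 1) := le_self_pow₀ (le_of_lt hcon) (by omega)
      nlinarith
end

section
/- Let Ω ⊆ ℝ^N (N ≥ 1) be a nonempty bounded open set, a ∈ ℝ^N, d > 0, λ ∈ ℝ, and let q ≥ 5 be an odd integer. Let u be continuous on the closure of Ω, twice continuously differentiable on Ω, with u(x) < 0 for all x ∈ Ω, u(x) = 0 for all x in the frontier of Ω, and −d·Δu(x) = λ⟨a,∇u(x)⟩ + u(x) + λ·u(x)² − u(x)^q for all x ∈ Ω. Then the supremum of |u| over the closure of Ω satisfies sup |u| ≤ (−λ)^{1/(q−2)} + 1 if λ ≤ 0, and sup |u| ≤ 1 if λ > 0. -/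
open Filter Topology

lemma second_deriv_nonneg_of_isLocalMin {g : ℝ → ℝ} {c : ℝ}
    (hg : ∀ᶠ t in 𝓝 (0:ℝ), DifferentiableAt ℝ g t)
    (hmin : IsLocalMin g 0)
    (hc : HasDerivAt (deriv g) c 0) : 0 ≤ c := by
  by_contra hneg
  push_neg at hneg
  have h0 : deriv g 0 = 0 := hmin.deriv_eq_zero
  have hslope : Tendsto (slope (deriv g) 0) (𝓝[≠] 0) (𝓝 c) :=
    hasDerivAt_iff_tendsto_slope.mp hc
  have hev : ∀ᶠ t in 𝓝[≠] (0:ℝ), slope (deriv g) 0 t < 0 :=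
    hslope.eventually_lt_const hneg
  have hev' : ∀ᶠ t in 𝓝 (0:ℝ), t ≠ 0 → slope (deriv g) 0 t < 0 := by
    simpa [eventually_nhdsWithin_iff] using hev
  obtain ⟨δ, hδpos, hδ⟩ := Metric.eventually_nhds_iff.mp ((hg.and hmin).and hev')
  have hkey : ∀ t ∈ Set.Ioo (0:ℝ) (δ/2), deriv g t < 0 := by
    intro t ht
    have hd : dist t 0 < δ := by
      rw [Real.dist_eq, sub_zero, abs_of_pos ht.1]
      linarith [ht.2]
    have := (hδ hd).2 (ne_of_gt ht.1)
    rw [slope_def_field, h0] at this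
    have ht0 : 0 < t := ht.1
    have : (deriv g t - 0) / (t - 0) < 0 := this
    rw [sub_zero, sub_zero] at this
    rcases div_neg_iff.mp this with h | h
    · linarith [h.2]
    · exact h.1
  have hanti : StrictAntiOn g (Set.Icc 0 (δ/2)) := by
    apply strictAntiOn_of_deriv_neg (convex_Icc _ _)
    · intro t ht
      have hd : dist t 0 < δ := by
        rw [Real.dist_eq, sub_zero, abs_of_nonneg ht.1]
        linarith [ht.2]
      exact ((hδ hd).1.1).continuousAt.continuousWithinAt
    · intro t ht
      rw [interior_Icc] at ht
      exact hkey t ht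
  have h1 : g (δ/2) < g 0 := hanti (by constructor <;> linarith) (by constructor <;> linarith) (by linarith)
  have h2 : g 0 ≤ g (δ/2) := by
    have hd : dist (δ/2) (0:ℝ) < δ := by
      rw [Real.dist_eq, sub_zero, abs_of_pos (by linarith)]; linarith
    exact (hδ hd).1.2
  linarith

lemma dir2_nonneg {E : Type*} [NormedAddCommGroup E] [NormedSpace ℝ E]
    {Ω : Set E} (hΩopen : IsOpen Ω) {u : E → ℝ} {x₀ : E}
    (hx₀ : x₀ ∈ Ω) (huC2 : ContDiffOn ℝ 2 u Ω) (hmin : IsLocalMin u x₀)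
    (v : E) : 0 ≤ fderiv ℝ (fderiv ℝ u) x₀ v v := by
  set φ : ℝ → E := fun t => x₀ + t • v with hφ
  have hφcont : Continuous φ := by continuity
  have hφ0 : φ 0 = x₀ := by simp [hφ]
  have hφtend : Tendsto φ (𝓝 0) (𝓝 x₀) := by
    simpa [hφ0] using hφcont.tendsto 0
  have hevΩ : ∀ᶠ t in 𝓝 (0:ℝ), φ t ∈ Ω := hφtend.eventually_mem (hΩopen.mem_nhds hx₀)
  have hdiff : DifferentiableOn ℝ u Ω := huC2.differentiableOn (by norm_num)
  set g : ℝ → ℝ := fun t => u (φ t) with hg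
  set F : E → (E →L[ℝ] ℝ) := fderiv ℝ u with hF
  -- differentiability of u at points of Ω
  have hdAt : ∀ y ∈ Ω, DifferentiableAt ℝ u y := fun y hy =>
    (hdiff.differentiableAt (hΩopen.mem_nhds hy))
  have hφd : ∀ t : ℝ, HasDerivAt φ v t := by
    intro t
    simpa [hφ] using ((hasDerivAt_id t).smul_const v).const_add x₀
  have hgd : ∀ᶠ t in 𝓝 (0:ℝ), HasDerivAt g (F (φ t) v) t := by
    filter_upwards [hevΩ] with t ht
    exact ((hdAt _ ht).hasFDerivAt.comp_hasDerivAt t (hφd t))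
  have hderivg : ∀ᶠ t in 𝓝 (0:ℝ), deriv g t = F (φ t) v := by
    filter_upwards [hgd] with t ht using ht.deriv
  have hFd : DifferentiableAt ℝ F x₀ := by
    have h2 : ContDiffAt ℝ 2 u x₀ := huC2.contDiffAt (hΩopen.mem_nhds hx₀)
    have h1 : ContDiffAt ℝ 1 F x₀ := h2.fderiv_right (by norm_num)
    exact h1.differentiableAt (by norm_num)
  have h2 : HasDerivAt (fun t => F (φ t) v) (fderiv ℝ F x₀ v v) 0 := by
    have hcomp : HasDerivAt (fun t => F (φ t)) (fderiv ℝ F x₀ v) 0 := by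
      have hh : HasFDerivAt F (fderiv ℝ F x₀) (φ 0) := hφ0 ▸ hFd.hasFDerivAt
      have := hh.comp_hasDerivAt 0 (hφd 0)
      exact this
    have := hcomp.clm_apply (hasDerivAt_const 0 v)
    simpa using this
  have h3 : HasDerivAt (deriv g) (fderiv ℝ F x₀ v v) 0 :=
    h2.congr_of_eventuallyEq hderivg
  refine second_deriv_nonneg_of_isLocalMin ?_ ?_ h3
  · filter_upwards [hgd] with t ht using ht.differentiableAt
  · have : ∀ᶠ t in 𝓝 (0:ℝ), u x₀ ≤ u (φ t) := hφtend.eventually hmin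
    simpa [IsLocalMin, IsMinFilter, hg, hφ0] using this

set_option maxHeartbeats 1000000 in
theorem stmt9 {N : ℕ} (hN : 1 ≤ N) (Ω : Set (EuclideanSpace ℝ (Fin N)))
    (hΩopen : IsOpen Ω) (hΩne : Ω.Nonempty) (hΩbdd : Bornology.IsBounded Ω)
    (a : EuclideanSpace ℝ (Fin N)) (d : ℝ) (hd : 0 < d) (lam : ℝ) (q : ℕ)
    (hq : 5 ≤ q) (hqodd : Odd q)
    (u : EuclideanSpace ℝ (Fin N) → ℝ)
    (hucont : ContinuousOn u (closure Ω)) (huC2 : ContDiffOn ℝ 2 u Ω)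
    (huneg : ∀ x ∈ Ω, u x < 0)
    (hubd : ∀ x ∈ frontier Ω, u x = 0)
    (hpde : ∀ x ∈ Ω, -(d * lap u x)
      = lam * fderiv ℝ u x a + u x + lam * (u x) ^ 2 - (u x) ^ q) :
    (lam ≤ 0 → sSup ((fun x => |u x|) '' closure Ω)
        ≤ (-lam) ^ ((1 : ℝ) / ((q : ℝ) - 2)) + 1)
      ∧ (0 < lam → sSup ((fun x => |u x|) '' closure Ω) ≤ 1) := by
  -- compactness, extremum
  have hKcompact : IsCompact (closure Ω) :=
    Metric.isCompact_of_isClosed_isBounded isClosed_closure hΩbdd.closure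
  have hKne : (closure Ω).Nonempty := hΩne.closure
  obtain ⟨x₀, hx₀K, hmax⟩ := hKcompact.exists_isMaxOn hKne hucont.neg
  set m : ℝ := -u x₀ with hm
  -- u ≤ 0 on closure
  have hule : ∀ x ∈ closure Ω, u x ≤ 0 := by
    intro x hx
    by_cases hxΩ : x ∈ Ω
    · exact (huneg x hxΩ).le
    · exact le_of_eq (hubd x (by rw [hΩopen.frontier_eq]; exact ⟨hx, hxΩ⟩))
  -- m > 0
  obtain ⟨x₁, hx₁⟩ := hΩne
  have hmpos : 0 < m := lt_of_lt_of_le (by simpa using (huneg x₁ hx₁))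
    (hmax (subset_closure hx₁))
  -- x₀ ∈ Ω
  have hx₀Ω : x₀ ∈ Ω := by
    by_contra hx
    have : u x₀ = 0 := hubd x₀ (by rw [hΩopen.frontier_eq]; exact ⟨hx₀K, hx⟩)
    rw [hm, this] at hmpos; norm_num at hmpos
  -- local min
  have hmin : IsLocalMin u x₀ := by
    filter_upwards [hΩopen.mem_nhds hx₀Ω] with y hy
    have := hmax (subset_closure hy)
    simpa using this
  -- gradient zero, laplacian nonneg
  have hgrad : fderiv ℝ u x₀ = 0 := hmin.fderiv_eq_zero
  have hlap : 0 ≤ lap u x₀ := by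
    apply Finset.sum_nonneg
    intro i _
    exact dir2_nonneg hΩopen hx₀Ω huC2 hmin _
  -- PDE at x₀
  have hpde0 := hpde x₀ hx₀Ω
  rw [hgrad] at hpde0
  simp only [ContinuousLinearMap.zero_apply, mul_zero, zero_add] at hpde0
  have hineq : u x₀ + lam * (u x₀) ^ 2 - (u x₀) ^ q ≤ 0 := by
    nlinarith [mul_nonneg hd.le hlap]
  -- rewrite in terms of m
  have hu0 : u x₀ = -m := by rw [hm]; ring
  have hkey : m ^ q ≤ m - lam * m ^ 2 := by
    rw [hu0, hqodd.neg_pow] at hineq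
    nlinarith
  obtain ⟨j, rfl⟩ : ∃ j, q = j + 3 := ⟨q - 3, by omega⟩
  have hj : 2 ≤ j := by omega
  -- bound on |u x| for all x
  have habs : ∀ x ∈ closure Ω, |u x| ≤ m := by
    intro x hx
    rw [abs_of_nonpos (hule x hx)]
    exact hmax hx
  constructor
  · -- lam ≤ 0
    intro hlam
    set c : ℝ := -lam with hc
    have hc0 : 0 ≤ c := by linarith
    set r : ℝ := c ^ ((1 : ℝ) / (((j+3 : ℕ) : ℝ) - 2)) with hr
    have hr0 : 0 ≤ r := Real.rpow_nonneg hc0 _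
    have hmle : m ≤ r + 1 := by
      by_contra hcon
      push_neg at hcon
      have hm1 : 1 < m := by linarith
      have hrm : r < m - 1 := by linarith
      -- (m-1)^(j+1) > c
      have hrpow : r ^ (j+1) = c := by
        rw [hr, ← Real.rpow_natCast (c ^ ((1 : ℝ) / (((j+3 : ℕ) : ℝ) - 2))) (j+1),
          ← Real.rpow_mul hc0]
        have hjne : ((j:ℝ)+1) ≠ 0 := by positivity
        have : (1 : ℝ) / (((j+3 : ℕ) : ℝ) - 2) * ((j+1 : ℕ) : ℝ) = 1 := by
          push_cast
          rw [show ((j:ℝ)+3-2) = (j:ℝ)+1 by ring]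
          rw [one_div, inv_mul_cancel₀ hjne]
        rw [this, Real.rpow_one]
      have h8 : c < (m-1) ^ (j+1) := by
        rw [← hrpow]
        exact pow_lt_pow_left₀ hrm hr0 (by omega)
      have h9 : (m-1) ^ (j+1) ≤ (m-1) * m ^ j := by
        rw [pow_succ]
        have h91 : (m-1) ^ j ≤ m ^ j := pow_le_pow_left₀ (by linarith) (by linarith) j
        nlinarith [pow_nonneg (by linarith : (0:ℝ) ≤ m - 1) j]
      have hP1 : 1 ≤ m ^ j := one_le_pow₀ hm1.le
      have e1 : m ^ (j+3) = m ^ j * m ^ 3 := by ring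
      have h10 : c * m ^ 2 < ((m-1) * m ^ j) * m ^ 2 :=
        mul_lt_mul_of_pos_right (lt_of_lt_of_le h8 h9) (by positivity)
      have e2 : ((m-1) * m ^ j) * m ^ 2 = m ^ j * m ^ 3 - m ^ j * m ^ 2 := by ring
      have hc2 : c * m ^ 2 = -(lam * m ^ 2) := by rw [hc]; ring
      have h11 : m ^ j * m ^ 2 < m := by linarith
      have h12 : m ^ 2 ≤ m ^ j * m ^ 2 := by nlinarith [hP1, sq_nonneg m]
      nlinarith
    calc sSup ((fun x => |u x|) '' closure Ω) ≤ m := by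
          apply Real.sSup_le _ hmpos.le
          rintro y ⟨x, hx, rfl⟩
          exact habs x hx
      _ ≤ r + 1 := hmle
  · -- lam > 0
    intro hlam
    have hmle : m ≤ 1 := by
      by_contra hcon
      push_neg at hcon
      have h1 : m ≤ m ^ (j+3) := le_self_pow₀ hcon.le (by omega)
      nlinarith [sq_nonneg m, mul_pos hlam (mul_pos hmpos hmpos)]
    apply Real.sSup_le _ (by norm_num)
    rintro y ⟨x, hx, rfl⟩
    exact le_trans (habs x hx) hmle
end
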